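/- arXiv:2101.12580 — 2 statements merged into one kernel-verified Lean document; each statement's English description precedes it below -/
import Mathlib

section
/- Let {γ_x}_{x ∈ M} be a family of pairwise non-meeting arcs at points x ∈ M ⊆ ℝ in the upper half-plane, each γ_x contained in {z : |z − x| ≤ 1}, and for x ∈ M ∩ K_n let p_n(x) be the first point of the line X_n = {z : Im z = 1/n} reached along γ_x starting from x. Then the map x ↦ Re(p_n(x)) is injective on M ∩ K_n. -/
open Set

theorem Set.PairwiseDisjoint.injOn_of_mem {ι α : Type*} {s : Set ι} {S : ι → Set α}
    {f : ι → α} (hS : s.PairwiseDisjoint S) (hf : ∀ i ∈ s, f i ∈ S i) : InjOn f s := by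
  intro i hi j hj hij
  by_contra hne
  exact (hS hi hj hne).ne_of_mem (hf i hi) (hij ▸ hf j hj) rfl

theorem Complex.injOn_re_setOf_im_eq (c : ℝ) : InjOn Complex.re {z : ℂ | z.im = c} :=
  fun _ hz _ hw hre => Complex.ext hre (hz.trans hw.symm)

theorem stmt_9_general (n : ℕ)
    (M Kn : Set ℝ)
    (p : ℝ → ℝ → ℂ) (t : ℝ → ℝ)
    -- t x is the parameter of the first point of the line Im z = 1/n reached along γ_x
    (ht : ∀ x ∈ M ∩ Kn, t x ∈ Ioc (0:ℝ) 1 ∧ (p x (t x)).im = 1 / (n : ℝ) ∧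
      ∀ s ∈ Ico (0:ℝ) (t x), (p x s).im ≠ 1 / (n : ℝ))
    -- the initial subarcs (which lie in Im z ≤ 1/n) pairwise do not meet
    (hdisj : ∀ x ∈ M ∩ Kn, ∀ y ∈ M ∩ Kn, x ≠ y →
      Disjoint (p x '' Icc 0 (t x)) (p y '' Icc 0 (t y))) :
    InjOn (fun x => (p x (t x)).re) (M ∩ Kn) := by
  have hline : MapsTo (fun x => p x (t x)) (M ∩ Kn) {z : ℂ | z.im = 1 / n} :=
    fun x hx => (ht x hx).2.1
  have hend : InjOn (fun x => p x (t x)) (M ∩ Kn) :=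
    PairwiseDisjoint.injOn_of_mem hdisj fun x hx =>
      mem_image_of_mem _ (right_mem_Icc.2 (ht x hx).1.1.le)
  exact (Complex.injOn_re_setOf_im_eq _).comp hend hline

/-- For a family of pairwise non-meeting arcs γ_x at x ∈ M ∩ K_n (each contained in the
closed unit disk about x), the real part of the first point p_n(x) where γ_x reaches the
line Im z = 1/n is injective in x. -/
theorem stmt_9 (n : ℕ) (hn : 1 ≤ n)
    (M Kn : Set ℝ)
    (p : ℝ → ℝ → ℂ) (t : ℝ → ℝ)
    (harc : ∀ x ∈ M ∩ Kn,
      ContinuousOn (p x) (Icc 0 1) ∧ InjOn (p x) (Icc 0 1) ∧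
      p x 0 = (x : ℂ) ∧ (∀ s ∈ Ioc (0:ℝ) 1, 0 < (p x s).im) ∧
      (p x '' Icc 0 1) ⊆ Metric.closedBall (x : ℂ) 1)
    -- t x is the parameter of the first point of the line Im z = 1/n reached along γ_x
    (ht : ∀ x ∈ M ∩ Kn, t x ∈ Ioc (0:ℝ) 1 ∧ (p x (t x)).im = 1 / (n : ℝ) ∧
      ∀ s ∈ Ico (0:ℝ) (t x), (p x s).im ≠ 1 / (n : ℝ))
    -- the initial subarcs (which lie in Im z ≤ 1/n) pairwise do not meet
    (hdisj : ∀ x ∈ M ∩ Kn, ∀ y ∈ M ∩ Kn, x ≠ y →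
      Disjoint (p x '' Icc 0 (t x)) (p y '' Icc 0 (t y))) :
    InjOn (fun x => (p x (t x)).re) (M ∩ Kn) :=
  stmt_9_general n M Kn p t ht hdisj
end

section
/- If φ: E → Y satisfies: for every open U ⊆ Y there exists T in the additive Borel class P^{ξ+1}(E) (i.e., Σ^0_{ξ+1} subsets of E) with φ⁻¹(U) ⊆ T ⊆ φ⁻¹(closure U), then the preimage under φ of every open subset of Y is Σ^0_{ξ+1} in E. -/
/-!
Write the open set `W` as `⋃ n, U n` with `U n` open and `closure (U n) ⊆ W` (take `U n` to be
the points at distance more than `1/n` from `Wᶜ`). If `φ⁻¹(U n) ⊆ T n ⊆ φ⁻¹(closure (U n))`, then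
`φ⁻¹ W = ⋃ n, T n`, and every class `Σ⁰_ζ` is closed under countable unions.
-/

open Set

/-- The additive Borel classes Σ⁰_ξ of a topological space: Σ⁰_1 consists of the open
sets, and Σ⁰_ξ consists of countable unions of complements of sets in lower classes. -/
inductive SigmaClass {X : Type*} [TopologicalSpace X] : Ordinal → Set X → Prop
  | open_ {s : Set X} : IsOpen s → SigmaClass 1 s
  | iUnion {ξ : Ordinal} (s : ℕ → Set X) (η : ℕ → Ordinal)
      (hη : ∀ n, 1 ≤ η n ∧ η n < ξ) (hs : ∀ n, SigmaClass (η n) (s n)) :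
      SigmaClass ξ (⋃ n, (s n)ᶜ)

section SigmaClass

variable {X : Type*} [TopologicalSpace X]

theorem sigmaClass_one_iff {s : Set X} : SigmaClass 1 s ↔ IsOpen s := by
  refine ⟨fun h => ?_, SigmaClass.open_⟩
  cases h with
  | open_ hs => exact hs
  | iUnion s η hη _ => exact absurd (hη 0).2 (hη 0).1.not_gt

theorem SigmaClass.exists_eq_iUnion_compl {ζ : Ordinal} {s : Set X} (h : SigmaClass ζ s)
    (hζ : ζ ≠ 1) :
    ∃ (t : ℕ → Set X) (η : ℕ → Ordinal), (∀ n, 1 ≤ η n ∧ η n < ζ) ∧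
      (∀ n, SigmaClass (η n) (t n)) ∧ s = ⋃ n, (t n)ᶜ := by
  cases h with
  | open_ => exact absurd rfl hζ
  | iUnion t η hη ht => exact ⟨t, η, hη, ht, rfl⟩

theorem sigmaClass_iUnion {ζ : Ordinal} {s : ℕ → Set X} (hs : ∀ n, SigmaClass ζ (s n)) :
    SigmaClass ζ (⋃ n, s n) := by
  by_cases hζ : ζ = 1
  · subst hζ
    simp only [sigmaClass_one_iff] at hs ⊢
    exact isOpen_iUnion hs
  choose t η hη ht hst using fun n => (hs n).exists_eq_iUnion_compl hζ
  have hreindex : ⋃ n, s n = ⋃ k, (t (Nat.pairEquiv.symm k).1 (Nat.pairEquiv.symm k).2)ᶜ := by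
    rw [iUnion_congr hst, ← iUnion_prod' fun p : ℕ × ℕ => (t p.1 p.2)ᶜ]
    exact (Nat.pairEquiv.symm.iSup_comp (g := fun p => (t p.1 p.2)ᶜ)).symm
  rw [hreindex]
  exact .iUnion _ _ (fun k => hη _ _) (fun k => ht _ _)

end SigmaClass

theorem IsOpen.exists_iUnion_isOpen_closure_subset {α : Type*} [PseudoEMetricSpace α]
    {W : Set α} (hW : IsOpen W) :
    ∃ U : ℕ → Set α, (∀ n, IsOpen (U n)) ∧ (∀ n, closure (U n) ⊆ W) ∧ ⋃ n, U n = W := by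
  set d : α → ENNReal := fun x => Metric.infEDist x Wᶜ
  have hd : Continuous d := Metric.continuous_infEDist
  have hmem : ∀ x, x ∈ W ↔ 0 < d x := fun x => by
    rw [pos_iff_ne_zero, ne_eq, ← Metric.mem_iff_infEDist_zero_of_closed hW.isClosed_compl,
      notMem_compl_iff]
  refine ⟨fun n => d ⁻¹' Ioi (n : ENNReal)⁻¹, fun n => isOpen_Ioi.preimage hd, fun n => ?_, ?_⟩
  · have hinv_pos : 0 < (n : ENNReal)⁻¹ := ENNReal.inv_pos.2 (ENNReal.natCast_ne_top n)
    calc closure (d ⁻¹' Ioi (n : ENNReal)⁻¹)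
        ⊆ d ⁻¹' Ici (n : ENNReal)⁻¹ :=
          closure_minimal (preimage_mono Ioi_subset_Ici_self) (isClosed_Ici.preimage hd)
      _ ⊆ W := fun x hx => (hmem x).2 (hinv_pos.trans_le hx)
  · ext x
    rw [mem_iUnion, hmem x]
    exact ⟨fun ⟨_, hn⟩ => zero_le.trans_lt hn, fun hx => ENNReal.exists_inv_nat_lt hx.ne'⟩

theorem stmt_11_general {E Y : Type*} [MetricSpace E] [MetricSpace Y]
    (ξ : Ordinal) (φ : E → Y)
    (h : ∀ U : Set Y, IsOpen U →
      ∃ T : Set E, SigmaClass (ξ + 1) T ∧ φ ⁻¹' U ⊆ T ∧ T ⊆ φ ⁻¹' (closure U)) :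
    ∀ W : Set Y, IsOpen W → SigmaClass (ξ + 1) (φ ⁻¹' W) := by
  intro W hW
  obtain ⟨U, hUopen, hUW, rfl⟩ := hW.exists_iUnion_isOpen_closure_subset
  choose T hT hUT hTU using fun n => h (U n) (hUopen n)
  have hpreimage : φ ⁻¹' ⋃ n, U n = ⋃ n, T n := by
    refine Subset.antisymm ?_ (iUnion_subset fun n => (hTU n).trans (preimage_mono (hUW n)))
    rw [preimage_iUnion]
    exact iUnion_mono hUT
  rw [hpreimage]
  exact sigmaClass_iUnion hT

/-- If for every open U ⊆ Y there is T ∈ Σ⁰_{ξ+1}(E) with φ⁻¹(U) ⊆ T ⊆ φ⁻¹(closure U),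
then the preimage under φ of every open set is Σ⁰_{ξ+1} in E. -/
theorem stmt_11 {E Y : Type*} [MetricSpace E] [MetricSpace Y]
    [TopologicalSpace.SeparableSpace Y]
    (ξ : Ordinal) (hξ : 1 ≤ ξ) (φ : E → Y)
    (h : ∀ U : Set Y, IsOpen U →
      ∃ T : Set E, SigmaClass (ξ + 1) T ∧ φ ⁻¹' U ⊆ T ∧ T ⊆ φ ⁻¹' (closure U)) :
    ∀ W : Set Y, IsOpen W → SigmaClass (ξ + 1) (φ ⁻¹' W) :=
  stmt_11_general ξ φ h
end
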